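/- arXiv:2507.02785 — 5 statements merged into one kernel-verified Lean document; each statement's English description precedes it below -/
import Mathlib

section
/- Let J be a finite set with |J| ≥ 2m, let S ⊆ J, and consider a uniformly random choice of a matching consisting of m pairwise disjoint edges with all endpoints in J. If |J| - 2m > |J|/2, then for every integer t, the probability that at least t elements of S are endpoints of the matching is at most ∑_{s ≥ t} C(2m, s) · (2|S|/|J|)^s. -/
/-!
Moving a covered vertex `a` of a matching `ℳ` to an uncovered vertex `u ∈ J` gives a matching,
and moving `u` back to `a` undoes it. Hence the pairs `(ℳ, u)` with `ℳ` covering `A ∪ {a}` and `u`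
uncovered inject into the pairs `(ℳ', u)` with `ℳ'` covering `A` and `u ∈ ℳ'` outside `A`; counting
both sides, the proportion of matchings covering a `k`-set is at most `(2m)_k / (|J| - 2m)^k`.
A union bound over the `t`-subsets of `S` bounds the probability of covering `t` points of `S` by
`C(|S|, t) (2m)_t / (|J| - 2m)^t ≤ C(2m, t) (|S| / (|J| - 2m))^t`, and `|J| - 2m > |J|/2` turns the
ratio into `2|S|/|J|`; this is the first term of the sum.
-/

open Finset

lemma Nat.choose_mul_descFactorial_le (n k t : ℕ) :
    n.choose t * k.descFactorial t ≤ k.choose t * n ^ t :=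
  calc n.choose t * k.descFactorial t = n.descFactorial t * k.choose t := by
        rw [Nat.descFactorial_eq_factorial_mul_choose, Nat.descFactorial_eq_factorial_mul_choose]
        ring
    _ ≤ n ^ t * k.choose t := Nat.mul_le_mul_right _ (Nat.descFactorial_le_pow n t)
    _ = k.choose t * n ^ t := mul_comm _ _

lemma choose_mul_pow_le_sum_Icc {R : Type*} [CommSemiring R] [PartialOrder R] [IsOrderedRing R]
    {x : R} (hx : 0 ≤ x) (n t : ℕ) :
    (n.choose t : R) * x ^ t ≤ ∑ s ∈ Icc t n, (n.choose s : R) * x ^ s := by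
  rcases le_or_gt t n with htn | hnt
  · exact single_le_sum (f := fun s => (n.choose s : R) * x ^ s) (fun _ _ => by positivity)
      (mem_Icc.2 ⟨le_rfl, htn⟩)
  · rw [Nat.choose_eq_zero_of_lt hnt, Nat.cast_zero, zero_mul]
    exact sum_nonneg fun _ _ => by positivity

namespace PairMatching

variable {V : Type*}

def IsMatchingOn (J : Finset V) (m : ℕ) (ℳ : Finset (Finset V)) : Prop :=
  #ℳ = m ∧ (∀ e ∈ ℳ, #e = 2 ∧ e ⊆ J) ∧ ∀ e ∈ ℳ, ∀ f ∈ ℳ, e ≠ f → Disjoint e f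

variable [DecidableEq V]

def endpoints (ℳ : Finset (Finset V)) : Finset V := ℳ.biUnion id

@[simp]
lemma mem_endpoints {ℳ : Finset (Finset V)} {x : V} : x ∈ endpoints ℳ ↔ ∃ e ∈ ℳ, x ∈ e := by
  simp [endpoints]

namespace IsMatchingOn

variable {J : Finset V} {m : ℕ} {ℳ : Finset (Finset V)}

lemma endpoints_subset (h : IsMatchingOn J m ℳ) : endpoints ℳ ⊆ J :=
  biUnion_subset.2 fun e he => (h.2.1 e he).2

lemma card_endpoints (h : IsMatchingOn J m ℳ) : #(endpoints ℳ) = 2 * m := by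
  rw [endpoints, card_biUnion (t := id) fun e he f hf hef => h.2.2 e he f hf hef,
    sum_const_nat (f := fun e => #(id e)) fun e he => (h.2.1 e he).1, h.1, mul_comm]

end IsMatchingOn

def replaceVertex (a u : V) (e : Finset V) : Finset V :=
  if a ∈ e then insert u (e.erase a) else e

section replaceVertex

variable {a u x : V} {e : Finset V}

lemma mem_replaceVertex : x ∈ replaceVertex a u e ↔ x = u ∧ a ∈ e ∨ x ≠ a ∧ x ∈ e := by
  unfold replaceVertex
  split_ifs with ha <;> grind

lemma card_replaceVertex (hu : u ∉ e) : #(replaceVertex a u e) = #e := by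
  unfold replaceVertex
  split_ifs with ha
  · rw [card_insert_of_notMem fun h => hu (mem_of_mem_erase h), card_erase_add_one ha]
  · rfl

lemma replaceVertex_subset_insert : replaceVertex a u e ⊆ insert u e := by
  intro x; rw [mem_replaceVertex, mem_insert]; tauto

lemma replaceVertex_replaceVertex (hu : u ∉ e) : replaceVertex u a (replaceVertex a u e) = e := by
  ext x; simp only [mem_replaceVertex]; grind

end replaceVertex

def swapEndpoint (a u : V) (ℳ : Finset (Finset V)) : Finset (Finset V) :=
  ℳ.image (replaceVertex a u)

section swapEndpoint

variable {J : Finset V} {m : ℕ} {ℳ : Finset (Finset V)} {a u : V}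

lemma swapEndpoint_swapEndpoint (hu : u ∉ endpoints ℳ) :
    swapEndpoint u a (swapEndpoint a u ℳ) = ℳ := by
  rw [swapEndpoint, swapEndpoint, image_image]
  refine (image_congr fun e he => ?_).trans image_id'
  exact replaceVertex_replaceVertex fun hue => hu (mem_endpoints.2 ⟨e, he, hue⟩)

lemma endpoints_swapEndpoint (ha : a ∈ endpoints ℳ) :
    endpoints (swapEndpoint a u ℳ) = insert u ((endpoints ℳ).erase a) := by
  ext x
  simp only [swapEndpoint, mem_endpoints, mem_image, mem_insert, mem_erase] at ha ⊢
  grind [mem_replaceVertex]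

lemma IsMatchingOn.swapEndpoint (h : IsMatchingOn J m ℳ) (huJ : u ∈ J)
    (hu : u ∉ endpoints ℳ) : IsMatchingOn J m (swapEndpoint a u ℳ) := by
  have hue : ∀ e ∈ ℳ, u ∉ e := fun e he hue => hu (mem_endpoints.2 ⟨e, he, hue⟩)
  have hinj : Set.InjOn (replaceVertex a u) ℳ := Set.LeftInvOn.injOn (f₁' := replaceVertex u a)
    fun e he => replaceVertex_replaceVertex (hue e he)
  refine ⟨by rw [PairMatching.swapEndpoint, card_image_of_injOn hinj, h.1], ?_, ?_⟩
  · simp only [PairMatching.swapEndpoint, mem_image, forall_exists_index, and_imp,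
      forall_apply_eq_imp_iff₂]
    intro e he
    exact ⟨(card_replaceVertex (hue e he)).trans (h.2.1 e he).1,
      replaceVertex_subset_insert.trans (insert_subset huJ (h.2.1 e he).2)⟩
  · simp only [PairMatching.swapEndpoint, mem_image, forall_exists_index, and_imp,
      forall_apply_eq_imp_iff₂]
    intro e he f hf hef
    have hd := h.2.2 e he f hf fun h => hef (h ▸ rfl)
    rw [Finset.disjoint_left] at hd ⊢
    intro x hxe hxf
    rw [mem_replaceVertex] at hxe hxf
    grind

end swapEndpoint

-- Spelled out, rather than filtered by `IsMatchingOn`, so that it is syntactically the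
-- denominator in `stmt1`.
def matchings [Fintype V] (J : Finset V) (m : ℕ) : Finset (Finset (Finset V)) :=
  {ℳ | #ℳ = m ∧ (∀ e ∈ ℳ, #e = 2 ∧ e ⊆ J) ∧ ∀ e ∈ ℳ, ∀ f ∈ ℳ, e ≠ f → Disjoint e f}

variable [Fintype V]

@[simp]
lemma mem_matchings {J : Finset V} {m : ℕ} {ℳ : Finset (Finset V)} :
    ℳ ∈ matchings J m ↔ IsMatchingOn J m ℳ := by
  simp [matchings, IsMatchingOn]

def matchingsCovering (J : Finset V) (m : ℕ) (A : Finset V) : Finset (Finset (Finset V)) :=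
  {ℳ ∈ matchings J m | A ⊆ endpoints ℳ}

@[simp]
lemma mem_matchingsCovering {J A : Finset V} {m : ℕ} {ℳ : Finset (Finset V)} :
    ℳ ∈ matchingsCovering J m A ↔ IsMatchingOn J m ℳ ∧ A ⊆ endpoints ℳ := by
  simp [matchingsCovering]

lemma card_matchingsCovering_insert_mul_le (J A : Finset V) (m : ℕ) {a : V} (ha : a ∉ A) :
    #(matchingsCovering J m (insert a A)) * (#J - 2 * m) ≤
      (2 * m - #A) * #(matchingsCovering J m A) := by
  set D := (matchingsCovering J m (insert a A)).sigma fun ℳ => J \ endpoints ℳ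
  set C := (matchingsCovering J m A).sigma fun ℳ => endpoints ℳ \ A
  have hD : #D = #(matchingsCovering J m (insert a A)) * (#J - 2 * m) := by
    refine (card_sigma _ _).trans (sum_const_nat fun ℳ hℳ => ?_)
    have hℳ := (mem_matchingsCovering.1 hℳ).1
    rw [card_sdiff_of_subset hℳ.endpoints_subset, hℳ.card_endpoints]
  have hC : #C = #(matchingsCovering J m A) * (2 * m - #A) := by
    refine (card_sigma _ _).trans (sum_const_nat fun ℳ hℳ => ?_)
    obtain ⟨hℳ, hA⟩ := mem_matchingsCovering.1 hℳ
    rw [card_sdiff_of_subset hA, hℳ.card_endpoints]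
  have hDC : #D ≤ #C := by
    refine card_le_card_of_injOn (fun p => ⟨swapEndpoint a p.2 p.1, p.2⟩) ?_ ?_
    · rintro ⟨ℳ, u⟩ hp
      simp only [D, C, coe_sigma, Set.mem_sigma_iff, mem_coe, mem_matchingsCovering, mem_sdiff,
        insert_subset_iff] at hp ⊢
      obtain ⟨⟨hℳ, haℳ, hA⟩, huJ, hu⟩ := hp
      rw [endpoints_swapEndpoint haℳ]
      refine ⟨⟨hℳ.swapEndpoint huJ hu, ?_⟩, mem_insert_self _ _, fun huA => hu (hA huA)⟩
      exact fun x hx => mem_insert_of_mem (mem_erase.2 ⟨ne_of_mem_of_not_mem hx ha, hA hx⟩)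
    · rintro ⟨ℳ, u⟩ hp ⟨ℳ', u'⟩ hp' h
      simp only [D, coe_sigma, Set.mem_sigma_iff, mem_coe, mem_sdiff, Sigma.mk.injEq,
        heq_eq_eq] at hp hp' h
      obtain ⟨h, rfl⟩ := h
      rw [← swapEndpoint_swapEndpoint hp.2.2, h, swapEndpoint_swapEndpoint hp'.2.2]
  rw [← hD, mul_comm, ← hC]
  exact hDC

lemma card_matchingsCovering_mul_pow_le (J A : Finset V) (m : ℕ) :
    #(matchingsCovering J m A) * (#J - 2 * m) ^ #A ≤
      (2 * m).descFactorial #A * #(matchings J m) := by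
  induction A using Finset.induction_on with
  | empty => simp [matchingsCovering]
  | @insert a A ha ih =>
    rw [card_insert_of_notMem ha, pow_succ, Nat.descFactorial_succ]
    calc #(matchingsCovering J m (insert a A)) * ((#J - 2 * m) ^ #A * (#J - 2 * m))
        = #(matchingsCovering J m (insert a A)) * (#J - 2 * m) * (#J - 2 * m) ^ #A := by ring
      _ ≤ (2 * m - #A) * #(matchingsCovering J m A) * (#J - 2 * m) ^ #A :=
        Nat.mul_le_mul_right _ (card_matchingsCovering_insert_mul_le J A m ha)
      _ = (2 * m - #A) * (#(matchingsCovering J m A) * (#J - 2 * m) ^ #A) := by ring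
      _ ≤ (2 * m - #A) * ((2 * m).descFactorial #A * #(matchings J m)) :=
        Nat.mul_le_mul_left _ ih
      _ = (2 * m - #A) * (2 * m).descFactorial #A * #(matchings J m) := by ring

lemma card_filter_le_card_inter_endpoints_le_sum (J S : Finset V) (m t : ℕ) :
    #{ℳ ∈ matchings J m | t ≤ #(S ∩ endpoints ℳ)} ≤
      ∑ A ∈ S.powersetCard t, #(matchingsCovering J m A) := by
  refine (card_le_card fun ℳ hℳ => ?_).trans card_biUnion_le
  rw [mem_filter] at hℳ
  obtain ⟨A, hA, hAt⟩ := exists_subset_card_eq hℳ.2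
  exact mem_biUnion.2 ⟨A, mem_powersetCard.2 ⟨hA.trans inter_subset_left, hAt⟩,
    mem_filter.2 ⟨hℳ.1, hA.trans inter_subset_right⟩⟩

lemma card_filter_le_card_inter_endpoints_mul_pow_le (J S : Finset V) (m t : ℕ) :
    #{ℳ ∈ matchings J m | t ≤ #(S ∩ endpoints ℳ)} * (#J - 2 * m) ^ t ≤
      (2 * m).choose t * #S ^ t * #(matchings J m) :=
  calc _ ≤ (∑ A ∈ S.powersetCard t, #(matchingsCovering J m A)) * (#J - 2 * m) ^ t :=
        Nat.mul_le_mul_right _ (card_filter_le_card_inter_endpoints_le_sum J S m t)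
    _ ≤ ∑ A ∈ S.powersetCard t, (2 * m).descFactorial t * #(matchings J m) := by
        rw [sum_mul]
        exact sum_le_sum fun A hA => by
          simpa only [(mem_powersetCard.1 hA).2] using card_matchingsCovering_mul_pow_le J A m
    _ = (#S).choose t * (2 * m).descFactorial t * #(matchings J m) := by
        rw [sum_const, card_powersetCard, smul_eq_mul, mul_assoc]
    _ ≤ _ := Nat.mul_le_mul_right _ (Nat.choose_mul_descFactorial_le _ _ _)

lemma card_filter_le_card_inter_endpoints_le (J S : Finset V) (m t : ℕ) (hm : 2 * m < #J) :
    (#{ℳ ∈ matchings J m | t ≤ #(S ∩ endpoints ℳ)} : ℝ) ≤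
      (2 * m).choose t * (#S / (#J - 2 * m : ℝ)) ^ t * #(matchings J m) := by
  have hK : ((#J - 2 * m : ℕ) : ℝ) = #J - 2 * m := by push_cast [hm.le]; ring
  have hKpos : (0 : ℝ) < #J - 2 * m := by rw [← hK]; exact_mod_cast Nat.sub_pos_of_lt hm
  rw [div_pow, mul_div_assoc', div_mul_eq_mul_div, le_div_iff₀ (pow_pos hKpos t), ← hK]
  exact_mod_cast card_filter_le_card_inter_endpoints_mul_pow_le J S m t

end PairMatching

open PairMatching in
theorem stmt1_general {V : Type*} [Fintype V] [DecidableEq V]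
    (J S : Finset V) (m t : ℕ)
    (hhalf : (J.card : ℝ) - 2 * m > (J.card : ℝ) / 2) :
    ((univ.filter (fun ℳ : Finset (Finset V) =>
        (ℳ.card = m ∧ (∀ e ∈ ℳ, e.card = 2 ∧ e ⊆ J) ∧
          ∀ e ∈ ℳ, ∀ f ∈ ℳ, e ≠ f → Disjoint e f) ∧
        t ≤ (S.filter (fun x => ∃ e ∈ ℳ, x ∈ e)).card)).card : ℝ) /
      ((univ.filter (fun ℳ : Finset (Finset V) =>
        ℳ.card = m ∧ (∀ e ∈ ℳ, e.card = 2 ∧ e ⊆ J) ∧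
          ∀ e ∈ ℳ, ∀ f ∈ ℳ, e ≠ f → Disjoint e f)).card : ℝ) ≤
      ∑ s ∈ Finset.Icc t (2 * m),
        ((2 * m).choose s : ℝ) * (2 * S.card / J.card : ℝ) ^ s := by
  have hK : (0 : ℝ) < #J - 2 * m := by linarith [(#J).cast_nonneg (α := ℝ)]
  have hm : 2 * m < #J := by exact_mod_cast sub_pos.1 hK
  have hratio : #S / (#J - 2 * m : ℝ) ≤ 2 * #S / #J := by
    rw [mul_comm 2 (#S : ℝ), ← div_div_eq_mul_div]
    exact div_le_div_of_nonneg_left (by positivity) (by linarith) hhalf.le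
  rw [← filter_filter]
  change (#{ℳ ∈ matchings J m | t ≤ #{x ∈ S | ∃ e ∈ ℳ, x ∈ e}} : ℝ) / #(matchings J m) ≤ _
  simp only [← mem_endpoints, filter_mem_eq_inter]
  refine div_le_of_le_mul₀ (Nat.cast_nonneg _) (sum_nonneg fun _ _ => by positivity) ?_
  calc _ ≤ (2 * m).choose t * (#S / (#J - 2 * m : ℝ)) ^ t * #(matchings J m) :=
        card_filter_le_card_inter_endpoints_le J S m t hm
    _ ≤ (2 * m).choose t * (2 * #S / #J : ℝ) ^ t * #(matchings J m) := by gcongr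
    _ ≤ _ := by gcongr; exact choose_mul_pow_le_sum_Icc (by positivity) _ _

/-- For a uniformly random matching of `m` disjoint edges with endpoints in `J`,
if `|J| - 2m > |J|/2` then the probability that at least `t` elements of `S ⊆ J`
are covered is at most `∑_{s ≥ t} C(2m, s) (2|S|/|J|)^s`. -/
theorem stmt1 {V : Type*} [Fintype V] [DecidableEq V]
    (J S : Finset V) (hSJ : S ⊆ J) (m t : ℕ)
    (h2m : 2 * m ≤ J.card)
    (hhalf : (J.card : ℝ) - 2 * m > (J.card : ℝ) / 2) :
    ((univ.filter (fun ℳ : Finset (Finset V) =>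
        (ℳ.card = m ∧ (∀ e ∈ ℳ, e.card = 2 ∧ e ⊆ J) ∧
          ∀ e ∈ ℳ, ∀ f ∈ ℳ, e ≠ f → Disjoint e f) ∧
        t ≤ (S.filter (fun x => ∃ e ∈ ℳ, x ∈ e)).card)).card : ℝ) /
      ((univ.filter (fun ℳ : Finset (Finset V) =>
        ℳ.card = m ∧ (∀ e ∈ ℳ, e.card = 2 ∧ e ⊆ J) ∧
          ∀ e ∈ ℳ, ∀ f ∈ ℳ, e ≠ f → Disjoint e f)).card : ℝ) ≤
      ∑ s ∈ Finset.Icc t (2 * m),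
        ((2 * m).choose s : ℝ) * (2 * S.card / J.card : ℝ) ^ s :=
  stmt1_general J S m t hhalf
end

section
/- Let G be a graph on vertex set [n] whose edge set contains the edges of a Hamiltonian cycle C. Fix a vertex v. Define N_0 = {v}, and for ℓ ≥ 1, N_ℓ = the set of vertices at graph distance exactly ℓ from v in G that are not adjacent in C to any vertex at distance ≤ ℓ-1 from v. Then for every ℓ ≥ 1, the ball B_G(v,ℓ) = {w : d_G(v,w) ≤ ℓ} is contained in the union over j = 0,...,ℓ of the sets of vertices within C-distance ℓ-j of N_j. -/
/-!
Induction on `ℓ`. A vertex `w` at `G`-distance exactly `ℓ + 1` from `v` either lies in `N (ℓ + 1)`,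
or it is `C`-adjacent to some `u` with `d_G(v, u) ≤ ℓ`; in the latter case `u` is covered at
level `ℓ` by some `B_C(N j, ℓ - j)`, and the `C`-edge `uw` puts `w` in `B_C(N j, ℓ + 1 - j)`.
-/

namespace SimpleGraph

variable {V : Type*} {G C : SimpleGraph V} {u v w : V}

lemma dist_eq_zero_of_le (hCG : C ≤ G) (h : G.dist u w = 0) : C.dist u w = 0 := by
  rcases dist_eq_zero_iff_eq_or_not_reachable.mp h with rfl | hG
  · exact dist_self
  · exact dist_eq_zero_of_not_reachable fun hC => hG (hC.mono hCG)

lemma dist_le_dist_add_one_of_adj (h : C.Adj v w) (u : V) : C.dist u w ≤ C.dist u v + 1 := by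
  simpa only [dist_eq_one_iff_adj.mpr h] using h.reachable.dist_triangle_right u

theorem exists_le_exists_mem_dist_le (hCG : C ≤ G) {N : ℕ → Set V} (hN0 : v ∈ N 0)
    (hN : ∀ ℓ w, G.dist v w = ℓ + 1 → w ∉ N (ℓ + 1) → ∃ u, G.dist v u ≤ ℓ ∧ C.Adj w u) :
    ∀ ℓ w, G.dist v w ≤ ℓ → ∃ j ≤ ℓ, ∃ u ∈ N j, C.dist u w ≤ ℓ - j := by
  intro ℓ
  induction ℓ with
  | zero =>
    intro w hw
    exact ⟨0, le_rfl, v, hN0, (dist_eq_zero_of_le hCG (Nat.le_zero.mp hw)).le⟩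
  | succ ℓ ih =>
    intro w hw
    by_cases hle : G.dist v w ≤ ℓ
    · obtain ⟨j, hj, u, hu, hd⟩ := ih w hle
      exact ⟨j, hj.trans ℓ.le_succ, u, hu, by omega⟩
    by_cases hwN : w ∈ N (ℓ + 1)
    · exact ⟨ℓ + 1, le_rfl, w, hwN, by simp⟩
    obtain ⟨u, hu, hadj⟩ := hN ℓ w (by omega) hwN
    obtain ⟨j, hj, u', hu', hd⟩ := ih u hu
    have := dist_le_dist_add_one_of_adj hadj.symm u'
    exact ⟨j, hj.trans ℓ.le_succ, u', hu', by omega⟩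

end SimpleGraph

theorem stmt3_general {V : Type*}
    (G C : SimpleGraph V) (hCG : C ≤ G)
    (v : V) (N : ℕ → Set V) (hN0 : N 0 = {v})
    (hN : ∀ ℓ : ℕ, 1 ≤ ℓ →
      N ℓ = {w | G.dist v w = ℓ ∧ ∀ u, G.dist v u ≤ ℓ - 1 → ¬ C.Adj w u}) :
    ∀ ℓ : ℕ, 1 ≤ ℓ →
      {w | G.dist v w ≤ ℓ} ⊆
        ⋃ j ∈ Finset.range (ℓ + 1), {w | ∃ u ∈ N j, C.dist u w ≤ ℓ - j} := by
  have hcover := SimpleGraph.exists_le_exists_mem_dist_le hCG (v := v) (N := N) (by simp [hN0])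
    fun ℓ w hw hwN => by
      simpa [hN (ℓ + 1) ℓ.succ_pos, hw] using hwN
  intro ℓ _ w hw
  obtain ⟨j, hj, u, hu, hd⟩ := hcover ℓ w hw
  exact Set.mem_biUnion (Finset.mem_range.mpr (Nat.lt_succ_of_le hj)) ⟨u, hu, hd⟩

/-- If `G` contains a Hamiltonian cycle `C`, `N 0 = {v}` and
`N ℓ = {w : d_G(v,w) = ℓ, w not C-adjacent to B_G(v,ℓ-1)}`, then
`B_G(v,ℓ) ⊆ ⋃_{j=0}^{ℓ} B_C(N j, ℓ - j)` for all `ℓ ≥ 1`. -/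
theorem stmt3 {V : Type*} [Fintype V] [DecidableEq V]
    (G C : SimpleGraph V) (hCG : C ≤ G)
    (hHam : ∃ (v₀ : V) (p : C.Walk v₀ v₀), p.IsHamiltonianCycle)
    (v : V) (N : ℕ → Set V) (hN0 : N 0 = {v})
    (hN : ∀ ℓ : ℕ, 1 ≤ ℓ →
      N ℓ = {w | G.dist v w = ℓ ∧ ∀ u, G.dist v u ≤ ℓ - 1 → ¬ C.Adj w u}) :
    ∀ ℓ : ℕ, 1 ≤ ℓ →
      {w | G.dist v w ≤ ℓ} ⊆
        ⋃ j ∈ Finset.range (ℓ + 1), {w | ∃ u ∈ N j, C.dist u w ≤ ℓ - j} :=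
  stmt3_general G C hCG v N hN0 hN
end

section
/- For every n-tuple of points x_1,...,x_n in a metric space, every ε ∈ (0,1), and every r > 0 such that each x_i has at least n^ε indices j with d(x_i, x_j) ≤ r, if n·(1 - n^{ε-1})^{⌊n^{1-ε} log² n⌋} < 1 then there exists a multiset S of ⌊n^{1-ε} log² n⌋ points of the tuple such that every x_i is within distance r of some point of S. -/
open Finset

/-! A uniformly random `S : Fin m → Fin n` misses the `r`-ball around `x i` with probability
`(1 - |ball|/n)^m ≤ (1 - n^{ε-1})^m`; by the union bound over the `n` points, the expected number
of uncovered points is below `1`, so some `S` covers every point. In counting form: the functions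
that miss some ball are fewer than all `n^m` functions. -/

theorem exists_forall_exists_mem_of_sum_card_compl_pow_lt {ι κ α : Type*} [Fintype ι]
    [Fintype κ] [Fintype α] [DecidableEq α] [DecidableEq κ] (B : ι → Finset α)
    (h : ∑ i, (B i)ᶜ.card ^ Fintype.card κ < Fintype.card α ^ Fintype.card κ) :
    ∃ S : κ → α, ∀ i, ∃ k, S k ∈ B i := by
  by_contra! hall
  have hcover : (univ : Finset (κ → α)) ⊆
      univ.biUnion fun i => Fintype.piFinset fun _ : κ => (B i)ᶜ := by
    intro S _
    obtain ⟨i, hi⟩ := hall S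
    exact mem_biUnion.mpr ⟨i, mem_univ i, Fintype.mem_piFinset.mpr fun k => mem_compl.mpr (hi k)⟩
  refine h.not_ge ?_
  calc Fintype.card α ^ Fintype.card κ = (univ : Finset (κ → α)).card := by simp
    _ ≤ _ := card_le_card hcover
    _ ≤ ∑ i, (Fintype.piFinset fun _ : κ => (B i)ᶜ).card := card_biUnion_le
    _ = ∑ i, (B i)ᶜ.card ^ Fintype.card κ := by simp [Fintype.card_piFinset]

theorem card_compl_le_mul_one_sub_rpow {n : ℕ} (hn : 0 < n) {ε : ℝ} (B : Finset (Fin n))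
    (hB : (n : ℝ) ^ ε ≤ B.card) : (Bᶜ.card : ℝ) ≤ n * (1 - (n : ℝ) ^ (ε - 1)) := by
  have hn0 : (n : ℝ) ≠ 0 := by positivity
  rw [card_compl, Fintype.card_fin, Nat.cast_sub (by simpa using card_le_univ B),
    Real.rpow_sub_one hn0, mul_sub, mul_one, mul_div_cancel₀ _ hn0]
  linarith

theorem stmt8_general {Y : Type*} [MetricSpace Y] (n : ℕ) (x : Fin n → Y)
    (ε r : ℝ)
    (hdense : ∀ i, (n : ℝ) ^ ε ≤
      ((univ.filter fun j => dist (x i) (x j) ≤ r).card : ℝ))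
    (m : ℕ) (hm : m = ⌊(n : ℝ) ^ (1 - ε) * Real.log n ^ 2⌋₊)
    (hsmall : (n : ℝ) * (1 - (n : ℝ) ^ (ε - 1)) ^ m < 1) :
    ∃ S : Fin m → Fin n, ∀ i, ∃ k, dist (x i) (x (S k)) ≤ r := by
  rcases Nat.eq_zero_or_pos n with rfl | hn
  · obtain rfl : m = 0 := by simp [hm]
    exact ⟨Fin.elim0, fun i => i.elim0⟩
  set B : Fin n → Finset (Fin n) := fun i => univ.filter fun j => dist (x i) (x j) ≤ r
  suffices h : ∑ i, (B i)ᶜ.card ^ m < n ^ m by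
    simpa [B] using exists_forall_exists_mem_of_sum_card_compl_pow_lt (κ := Fin m) B (by simpa)
  have hbound i : ((B i)ᶜ.card : ℝ) ^ m ≤ (n * (1 - (n : ℝ) ^ (ε - 1))) ^ m :=
    pow_le_pow_left₀ (Nat.cast_nonneg _) (card_compl_le_mul_one_sub_rpow hn _ (hdense i)) m
  have hn0 : (0 : ℝ) < n := by exact_mod_cast hn
  have hcount : (∑ i, (B i)ᶜ.card ^ m : ℝ) < (n : ℝ) ^ m := calc
    _ ≤ ∑ _i : Fin n, ((n : ℝ) * (1 - (n : ℝ) ^ (ε - 1))) ^ m := sum_le_sum fun i _ => hbound i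
    _ = (n : ℝ) ^ m * (n * (1 - (n : ℝ) ^ (ε - 1)) ^ m) := by
      rw [sum_const, card_univ, Fintype.card_fin, nsmul_eq_mul, mul_pow]; ring
    _ < (n : ℝ) ^ m := mul_lt_of_lt_one_right (by positivity) hsmall
  exact_mod_cast hcount

/-- Existence of good seeds: if every point of the tuple has at least `n^ε` points
of the tuple within distance `r`, and `n (1 - n^{ε-1})^m < 1` with
`m = ⌊n^{1-ε} log² n⌋`, then there is a multiset of `m` points of the tuple such
that every point of the tuple is within distance `r` of one of them. -/
theorem stmt8 {Y : Type*} [MetricSpace Y] (n : ℕ) (x : Fin n → Y)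
    (ε r : ℝ) (hε0 : 0 < ε) (hε1 : ε < 1) (hr : 0 < r)
    (hdense : ∀ i, (n : ℝ) ^ ε ≤
      ((univ.filter fun j => dist (x i) (x j) ≤ r).card : ℝ))
    (m : ℕ) (hm : m = ⌊(n : ℝ) ^ (1 - ε) * Real.log n ^ 2⌋₊)
    (hsmall : (n : ℝ) * (1 - (n : ℝ) ^ (ε - 1)) ^ m < 1) :
    ∃ S : Fin m → Fin n, ∀ i, ∃ k, dist (x i) (x (S k)) ≤ r :=
  stmt8_general n x ε r hdense m hm hsmall
end

section
/- Let E ⊆ C([n],2) be a set of unordered pairs such that for every i ∈ [n], |{j ≠ i : {i,j} ∉ E}| ≤ K. Then there is a universal constant C such that, provided K ≤ n/(2C), the probability that a uniformly random Hamiltonian cycle on [n] (induced by a uniform permutation π via edges {π(i), π(i mod n + 1)}) uses no edge from E is at most (C·K/n)^n. -/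
open Finset

section Aux

variable {n : ℕ} (E : Finset (Sym2 (Fin n)))

/-- sequences whose consecutive entries are distinct and avoid `E` -/
def okSeq {m : ℕ} (f : Fin m → Fin n) : Prop :=
  ∀ i : Fin m, ∀ h : (i : ℕ) + 1 < m,
    f ⟨(i : ℕ) + 1, h⟩ ≠ f i ∧ s(f i, f ⟨(i : ℕ) + 1, h⟩) ∉ E

instance {m : ℕ} : DecidablePred (okSeq E (m := m)) := fun f => by
  unfold okSeq; infer_instance

def TT (m : ℕ) : Finset (Fin m → Fin n) := univ.filter (okSeq E)

lemma step (K : ℕ)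
    (hK : ∀ i : Fin n, (univ.filter fun j => j ≠ i ∧ s(i, j) ∉ E).card ≤ K)
    (m : ℕ) (hm : 1 ≤ m) :
    (TT E (m + 1)).card ≤ (TT E m).card * K := by
  have hmap : ∀ f ∈ TT E (m + 1), Fin.init f ∈ TT E m := by
    intro f hf
    simp only [TT, mem_filter, mem_univ, true_and] at hf ⊢
    intro i h
    have h' : (i : ℕ) + 1 < m + 1 := Nat.lt_succ_of_lt h
    have := hf ⟨(i : ℕ), Nat.lt_succ_of_lt i.2⟩ h'
    simpa [Fin.init, Fin.castSucc, Fin.castAdd, Fin.castLE] using this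
  rw [Finset.card_eq_sum_card_fiberwise hmap]
  have hfiber : ∀ g ∈ TT E m,
      ((TT E (m + 1)).filter fun f => Fin.init f = g).card ≤ K := by
    intro g _
    set v : Fin n := g ⟨m - 1, Nat.sub_lt hm Nat.one_pos⟩ with hv
    calc ((TT E (m + 1)).filter fun f => Fin.init f = g).card
        ≤ (univ.filter fun j => j ≠ v ∧ s(v, j) ∉ E).card := by
          apply Finset.card_le_card_of_injOn (fun f => f (Fin.last m))
          · intro f hf
            simp only [Finset.mem_coe, mem_filter, mem_univ, true_and] at hf ⊢
            obtain ⟨hf1, hf2⟩ := hf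
            simp only [TT, mem_filter, mem_univ, true_and] at hf1
            have hlt : (m - 1) + 1 < m + 1 := by omega
            have := hf1 ⟨m - 1, by omega⟩ hlt
            have he1 : (⟨(m - 1) + 1, hlt⟩ : Fin (m + 1)) = Fin.last m := by
              ext
              simp only [Fin.val_last]
              omega
            have he2 : f ⟨m - 1, by omega⟩ = v := by
              rw [hv, ← hf2]
              simp [Fin.init, Fin.castSucc, Fin.castAdd, Fin.castLE]
            rw [he1, he2] at this
            exact this
          · intro f hf f' hf' hee
            simp only [Finset.mem_coe, mem_filter] at hf hf'
            funext j
            induction j using Fin.lastCases with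
            | last => exact hee
            | cast j =>
              have : Fin.init f j = Fin.init f' j := by rw [hf.2, hf'.2]
              simpa [Fin.init] using this
      _ ≤ K := hK v
  calc ∑ g ∈ TT E m, ((TT E (m + 1)).filter fun f => Fin.init f = g).card
      ≤ ∑ _g ∈ TT E m, K := Finset.sum_le_sum hfiber
    _ = (TT E m).card * K := by rw [Finset.sum_const, smul_eq_mul]

lemma count_bound (K : ℕ)
    (hK : ∀ i : Fin n, (univ.filter fun j => j ≠ i ∧ s(i, j) ∉ E).card ≤ K) :
    ∀ m : ℕ, 1 ≤ m → (TT E m).card ≤ n * K ^ (m - 1) := by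
  intro m
  induction m with
  | zero => intro h; omega
  | succ m ih =>
    intro _
    rcases Nat.eq_zero_or_pos m with hm0 | hm1
    · subst hm0
      calc (TT E 1).card ≤ (univ : Finset (Fin 1 → Fin n)).card :=
            Finset.card_le_card (Finset.filter_subset _ _)
        _ = n * K ^ 0 := by simp [Finset.card_univ]
    · calc (TT E (m + 1)).card ≤ (TT E m).card * K := step E K hK m hm1
        _ ≤ n * K ^ (m - 1) * K := Nat.mul_le_mul_right K (ih hm1)
        _ = n * K ^ m := by
            rw [mul_assoc, ← pow_succ]
            congr 2
            omega

end Aux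

/-- `n^n ≤ 3^n * n!` over the reals -/
lemma pow_self_le_three_pow_mul_factorial (n : ℕ) :
    (n : ℝ) ^ n ≤ 3 ^ n * n.factorial := by
  have h1 : (n : ℝ) ^ n / n.factorial ≤ Real.exp n :=
    Real.pow_div_factorial_le_exp (n : ℝ) (by positivity) n
  have h2 : Real.exp (n : ℝ) ≤ 3 ^ n := by
    rw [← Real.exp_one_pow]
    exact pow_le_pow_left₀ (Real.exp_pos 1).le
      (le_trans Real.exp_one_lt_d9.le (by norm_num)) n
  have hfac : (0 : ℝ) < n.factorial := by
    exact_mod_cast Nat.factorial_pos n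
  rw [div_le_iff₀ hfac] at h1
  calc (n : ℝ) ^ n ≤ Real.exp n * n.factorial := h1
    _ ≤ 3 ^ n * n.factorial := by
        apply mul_le_mul_of_nonneg_right h2 hfac.le

/-- There is a universal constant `C > 0` such that: if every vertex `i ∈ [n]`
has at most `K` non-neighbors `j` with `{i,j} ∉ E`, and `K ≤ n/(2C)`, then the
probability that a uniformly random Hamiltonian cycle (generated by a uniform
permutation `π` via the edges `{π(i), π(i+1)}`) uses no edge of `E` is at most
`(C K / n)^n`. -/
theorem stmt18 :
    ∃ C : ℝ, 0 < C ∧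
      ∀ (n K : ℕ) (E : Finset (Sym2 (Fin n))),
        2 ≤ n →
        (∀ e ∈ E, ¬ e.IsDiag) →
        (∀ i : Fin n, ((univ.filter fun j => j ≠ i ∧ s(i, j) ∉ E).card : ℝ) ≤ K) →
        (K : ℝ) ≤ n / (2 * C) →
        ((univ.filter fun π : Equiv.Perm (Fin n) =>
            ∀ i : Fin n, s(π i, π (finRotate n i)) ∉ E).card : ℝ) /
          (n.factorial : ℝ) ≤ (C * K / n) ^ n := by
  refine ⟨9, by norm_num, fun n K E hn _hdiag hK _hKn => ?_⟩
  have hKnat : ∀ i : Fin n, (univ.filter fun j => j ≠ i ∧ s(i, j) ∉ E).card ≤ K :=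
    fun i => by exact_mod_cast hK i
  -- the valid permutations inject into TT E n
  have hcard : (univ.filter fun π : Equiv.Perm (Fin n) =>
      ∀ i : Fin n, s(π i, π (finRotate n i)) ∉ E).card ≤ (TT E n).card := by
    apply Finset.card_le_card_of_injOn (fun π : Equiv.Perm (Fin n) => ⇑π)
    · intro π hπ
      simp only [Finset.mem_coe, mem_filter, mem_univ, true_and] at hπ
      simp only [Finset.mem_coe, TT, mem_filter, mem_univ, true_and]
      intro i h
      constructor
      · intro hEq
        have := π.injective hEq
        have : (i : ℕ) + 1 = (i : ℕ) := by
          have := congrArg Fin.val this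
          simpa using this
        omega
      · have hrot : finRotate n i = ⟨(i : ℕ) + 1, h⟩ := by
          obtain ⟨m, rfl⟩ : ∃ m, n = m + 1 := ⟨n - 1, by omega⟩
          rw [finRotate_succ_apply]
          have hv : (i + 1).val = i.val + 1 :=
            Fin.val_add_one_of_lt (by
              rw [Fin.lt_iff_val_lt_val, Fin.val_last]; omega)
          ext
          rw [hv]
        have := hπ i
        rwa [hrot] at this
    · intro π _ π' _ hpp
      exact Equiv.coe_fn_injective hpp
  have hcard2 : (TT E n).card ≤ n * K ^ (n - 1) :=
    count_bound E K hKnat n (by omega)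
  have hfac : (0 : ℝ) < n.factorial := by exact_mod_cast n.factorial_pos
  have hX : ((univ.filter fun π : Equiv.Perm (Fin n) =>
      ∀ i : Fin n, s(π i, π (finRotate n i)) ∉ E).card : ℝ)
      ≤ (n : ℝ) * (K : ℝ) ^ (n - 1) := by
    exact_mod_cast le_trans hcard hcard2
  set Xr : ℝ := ((univ.filter fun π : Equiv.Perm (Fin n) =>
      ∀ i : Fin n, s(π i, π (finRotate n i)) ∉ E).card : ℝ) with hXr
  have hXr0 : 0 ≤ Xr := by positivity
  rcases Nat.eq_zero_or_pos K with hK0 | hK1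
  · subst hK0
    have hzero : (0 : ℝ) ^ (n - 1) = 0 := zero_pow (by omega)
    have : Xr ≤ 0 := by
      calc Xr ≤ (n : ℝ) * (0 : ℕ) ^ (n - 1) := hX
        _ = 0 := by push_cast; rw [hzero]; ring
    have hXz : Xr = 0 := le_antisymm this hXr0
    rw [hXz, zero_div]
    have : ((9 : ℝ) * (0 : ℕ) / n) ^ n = 0 := by
      push_cast
      rw [mul_zero, zero_div, zero_pow (by omega)]
    rw [this]
  · have hKR : (1 : ℝ) ≤ K := by exact_mod_cast hK1
    have hnR : (0 : ℝ) < n := by positivity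
    have h3 : (n : ℝ) ^ n ≤ 3 ^ n * n.factorial :=
      pow_self_le_three_pow_mul_factorial n
    have hn3 : (n : ℝ) ≤ 3 ^ n := by
      exact_mod_cast (Nat.lt_pow_self (by norm_num : 1 < 3) : n < 3 ^ n).le
    have hnn : (0 : ℝ) < (n : ℝ) ^ n := by positivity
    have hrhs : ((9 : ℝ) * K / n) ^ n = (9 ^ n * (K : ℝ) ^ n) / (n : ℝ) ^ n := by
      rw [div_pow, mul_pow]
    rw [hrhs, div_le_div_iff₀ hfac hnn]
    have e1 : (3 : ℝ) ^ n * 3 ^ n = 9 ^ n := by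
      rw [← mul_pow]; norm_num
    have e2 : (K : ℝ) * (K : ℝ) ^ (n - 1) = (K : ℝ) ^ n := by
      rw [← pow_succ']; congr 1; omega
    have h9 : (0 : ℝ) < 3 ^ n := by positivity
    calc Xr * (n : ℝ) ^ n
        ≤ ((n : ℝ) * (K : ℝ) ^ (n - 1)) * (n : ℝ) ^ n :=
          mul_le_mul_of_nonneg_right hX hnn.le
      _ ≤ ((n : ℝ) * (K : ℝ) ^ (n - 1)) * (3 ^ n * n.factorial) := by
          apply mul_le_mul_of_nonneg_left h3
          positivity
      _ = ((n : ℝ) * 3 ^ n) * ((K : ℝ) ^ (n - 1) * n.factorial) := by ring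
      _ ≤ ((3 : ℝ) ^ n * 3 ^ n * K) * ((K : ℝ) ^ (n - 1) * n.factorial) := by
          apply mul_le_mul_of_nonneg_right _ (by positivity)
          nlinarith [h9, hn3, hKR]
      _ = 9 ^ n * (K : ℝ) ^ n * n.factorial := by
          rw [← e1, ← e2]; ring
end

section
/- Let E ⊆ C([n],2) with the property that for every i ∈ [n], |{j ≠ i : {i,j} ∉ E}| ≤ K, where 4K ≤ n. Let M ≤ n/4 and let 𝓜 be a uniformly random matching of size M on [n]. Then the probability that no edge of 𝓜 belongs to E is at most (4K/n)^M. -/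
/-!
Count pairs (matching of size `m + 1`, one of its edges) in two ways: deleting the edge gives
a matching of size `m` together with one of the `C(n - 2m, 2)` pairs of its free vertices, and
every such extension arises exactly once. Hence `(m + 1) · #matchings(m + 1) = #matchings(m) ·
C(n - 2m, 2)`, while for matchings avoiding `E` only the at most `(n - 2m) K` free pairs outside
`E` are available as extensions. Since `(n - 2m) K ≤ (4K / n) C(n - 2m, 2)` as long as
`4(m + 1) ≤ n`, the proportion of matchings avoiding `E` drops by a factor `4K / n` at each step.
-/

open Finset

namespace Matching

variable {α : Type*}

def IsMatchingOfCard (m : ℕ) (ℳ : Finset (Finset α)) : Prop :=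
  #ℳ = m ∧ (∀ e ∈ ℳ, #e = 2) ∧ ∀ e ∈ ℳ, ∀ f ∈ ℳ, e ≠ f → Disjoint e f

lemma notMem_of_card_eq_two_of_forall_disjoint {N : Finset (Finset α)} {e : Finset α}
    (he₂ : #e = 2) (heN : ∀ f ∈ N, Disjoint e f) : e ∉ N := fun h => by
  simp [disjoint_self.1 (heN e h)] at he₂

variable [DecidableEq α]

instance (m : ℕ) : DecidablePred (IsMatchingOfCard (α := α) m) :=
  fun _ => inferInstanceAs (Decidable (_ ∧ _))

lemma IsMatchingOfCard.erase {m : ℕ} {ℳ : Finset (Finset α)} (hℳ : IsMatchingOfCard (m + 1) ℳ)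
    {e : Finset α} (he : e ∈ ℳ) : IsMatchingOfCard m (ℳ.erase e) := by
  obtain ⟨hcard, htwo, hdisj⟩ := hℳ
  refine ⟨by rw [card_erase_of_mem he, hcard, Nat.add_sub_cancel], fun f hf => ?_,
    fun f hf g hg => ?_⟩
  · exact htwo f (mem_of_mem_erase hf)
  · exact hdisj f (mem_of_mem_erase hf) g (mem_of_mem_erase hg)

lemma IsMatchingOfCard.insert {m : ℕ} {N : Finset (Finset α)} (hN : IsMatchingOfCard m N)
    {e : Finset α} (he₂ : #e = 2) (heN : ∀ f ∈ N, Disjoint e f) :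
    IsMatchingOfCard (m + 1) (insert e N) := by
  obtain ⟨hcard, htwo, hdisj⟩ := hN
  refine ⟨by rw [card_insert_of_notMem (notMem_of_card_eq_two_of_forall_disjoint he₂ heN), hcard],
    ?_, ?_⟩
  · simpa [he₂] using htwo
  · intro f hf g hg hfg
    rcases mem_insert.1 hf with rfl | hfN <;> rcases mem_insert.1 hg with rfl | hgN
    · exact absurd rfl hfg
    · exact heN g hgN
    · exact (heN f hfN).symm
    · exact hdisj f hfN g hgN hfg

variable [Fintype α]

def matchingsOfCard (m : ℕ) : Finset (Finset (Finset α)) :=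
  univ.filter (IsMatchingOfCard m)

def freeVertices (N : Finset (Finset α)) : Finset α :=
  univ \ N.biUnion id

def extensions (N : Finset (Finset α)) : Finset (Finset α) :=
  (freeVertices N).powersetCard 2

lemma mem_extensions {N : Finset (Finset α)} {e : Finset α} :
    e ∈ extensions N ↔ #e = 2 ∧ ∀ f ∈ N, Disjoint e f := by
  rw [extensions, mem_powersetCard, freeVertices, subset_sdiff, disjoint_biUnion_right]
  exact ⟨fun h => ⟨h.2, h.1.2⟩, fun h => ⟨⟨subset_univ _, h.2⟩, h.1⟩⟩

lemma IsMatchingOfCard.card_freeVertices {m : ℕ} {N : Finset (Finset α)}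
    (hN : IsMatchingOfCard m N) : #(freeVertices N) = Fintype.card α - 2 * m := by
  obtain ⟨hcard, htwo, hdisj⟩ := hN
  rw [freeVertices, card_sdiff_of_subset (subset_univ _), card_univ,
    card_biUnion (t := id) fun e he f hf hef => hdisj e he f hf hef,
    sum_const_nat (f := fun e => #(id e)) htwo, hcard, mul_comm]

lemma IsMatchingOfCard.card_extensions {m : ℕ} {N : Finset (Finset α)}
    (hN : IsMatchingOfCard m N) : #(extensions N) = (Fintype.card α - 2 * m).choose 2 := by
  rw [extensions, card_powersetCard, hN.card_freeVertices]

lemma succ_mul_card_filter_matchingsOfCard_succ (P : Finset α → Prop) [DecidablePred P]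
    (m : ℕ) :
    (m + 1) * #((matchingsOfCard (m + 1)).filter fun ℳ => ∀ e ∈ ℳ, P e) =
      ∑ N ∈ (matchingsOfCard m).filter (fun N => ∀ e ∈ N, P e), #((extensions N).filter P) := by
  rw [← card_sigma, mul_comm, ← sum_const_nat (f := fun ℳ : Finset (Finset α) => #ℳ)
    fun ℳ hℳ => (mem_filter.1 (mem_filter.1 hℳ).1).2.1, ← card_sigma]
  refine card_nbij' (fun p => ⟨p.1.erase p.2, p.2⟩) (fun q => ⟨insert q.2 q.1, q.2⟩)
    ?_ ?_ ?_ ?_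
  · rintro ⟨ℳ, e⟩ hp
    simp only [coe_sigma, Set.mem_sigma_iff, mem_coe, mem_filter, matchingsOfCard,
      mem_univ, true_and] at hp ⊢
    obtain ⟨⟨hℳ, hP⟩, he⟩ := hp
    refine ⟨⟨hℳ.erase he, fun f hf => hP f (mem_of_mem_erase hf)⟩, ?_, hP e he⟩
    exact mem_extensions.2 ⟨hℳ.2.1 e he, fun f hf =>
      hℳ.2.2 e he f (mem_of_mem_erase hf) (ne_of_mem_erase hf).symm⟩
  · rintro ⟨N, e⟩ hq
    simp only [coe_sigma, Set.mem_sigma_iff, mem_coe, mem_filter, matchingsOfCard,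
      mem_univ, true_and] at hq ⊢
    obtain ⟨⟨hN, hP⟩, he, heP⟩ := hq
    obtain ⟨he₂, heN⟩ := mem_extensions.1 he
    refine ⟨⟨hN.insert he₂ heN, ?_⟩, mem_insert_self _ _⟩
    simpa [heP] using hP
  · rintro ⟨ℳ, e⟩ hp
    simp only [coe_sigma, Set.mem_sigma_iff, mem_coe] at hp
    simp [insert_erase hp.2]
  · rintro ⟨N, e⟩ hq
    simp only [coe_sigma, Set.mem_sigma_iff, mem_coe, mem_filter] at hq
    obtain ⟨he₂, heN⟩ := mem_extensions.1 hq.2.1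
    simp [erase_insert (notMem_of_card_eq_two_of_forall_disjoint he₂ heN)]

lemma card_filter_powersetCard_two_notMem_le {K : ℕ} {E : Finset (Finset α)}
    (hK : ∀ i, #(univ.filter fun j => j ≠ i ∧ ({i, j} : Finset α) ∉ E) ≤ K) (s : Finset α) :
    #((s.powersetCard 2).filter (· ∉ E)) ≤ #s * K := by
  have hcover : (s.powersetCard 2).filter (· ∉ E) ⊆ s.biUnion fun i =>
      (univ.filter fun j => j ≠ i ∧ ({i, j} : Finset α) ∉ E).image fun j => {i, j} := by
    intro e he
    obtain ⟨⟨hes, he₂⟩, heE⟩ := mem_filter.1 he |>.imp_left mem_powersetCard.1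
    obtain ⟨x, y, hxy, rfl⟩ := card_eq_two.1 he₂
    simp only [mem_biUnion, mem_image, mem_filter, mem_univ, true_and]
    exact ⟨x, hes (mem_insert_self _ _), y, ⟨hxy.symm, heE⟩, rfl⟩
  calc #((s.powersetCard 2).filter (· ∉ E))
      ≤ ∑ i ∈ s, #((univ.filter fun j => j ≠ i ∧ ({i, j} : Finset α) ∉ E).image
          fun j => ({i, j} : Finset α)) := (card_le_card hcover).trans card_biUnion_le
    _ ≤ ∑ _i ∈ s, K := sum_le_sum fun i _ => card_image_le.trans (hK i)
    _ = #s * K := by rw [sum_const, smul_eq_mul]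

lemma succ_mul_card_matchingsOfCard_succ (m : ℕ) :
    (m + 1) * #(matchingsOfCard (α := α) (m + 1)) =
      #(matchingsOfCard (α := α) m) * (Fintype.card α - 2 * m).choose 2 := by
  have h := succ_mul_card_filter_matchingsOfCard_succ (α := α) (fun _ => True) m
  simp only [imp_true_iff, filter_true] at h
  rw [h, sum_const_nat fun N hN => (mem_filter.1 hN).2.card_extensions]

def avoidingMatchings (E : Finset (Finset α)) (m : ℕ) : Finset (Finset (Finset α)) :=
  (matchingsOfCard m).filter fun ℳ => ∀ e ∈ ℳ, e ∉ E

lemma succ_mul_card_avoidingMatchings_succ_le {K : ℕ} {E : Finset (Finset α)}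
    (hK : ∀ i, #(univ.filter fun j => j ≠ i ∧ ({i, j} : Finset α) ∉ E) ≤ K) (m : ℕ) :
    (m + 1) * #(avoidingMatchings E (m + 1)) ≤
      #(avoidingMatchings E m) * ((Fintype.card α - 2 * m) * K) := by
  rw [avoidingMatchings, succ_mul_card_filter_matchingsOfCard_succ, ← smul_eq_mul]
  refine sum_le_card_nsmul _ _ _ fun N hN => ?_
  rw [← (mem_filter.1 (mem_filter.1 hN).1).2.card_freeVertices]
  exact card_filter_powersetCard_two_notMem_le hK _

lemma mul_le_four_mul_choose_two {n r : ℕ} (h : n + 2 ≤ 2 * r) : r * n ≤ 4 * r.choose 2 := by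
  have h2 : 2 * r.choose 2 = r * (r - 1) := by
    rw [Nat.choose_two_right, Nat.mul_div_cancel' (Nat.even_mul_pred_self r).two_dvd]
  calc r * n ≤ r * (2 * (r - 1)) := Nat.mul_le_mul_left _ (by omega)
    _ = 4 * r.choose 2 := by rw [mul_left_comm, ← h2]; ring

lemma card_avoidingMatchings_mul_pow_le {K : ℕ} {E : Finset (Finset α)}
    (hK : ∀ i, #(univ.filter fun j => j ≠ i ∧ ({i, j} : Finset α) ∉ E) ≤ K) {m : ℕ}
    (hm : 4 * m ≤ Fintype.card α) :
    #(avoidingMatchings E m) * Fintype.card α ^ m ≤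
      (4 * K) ^ m * #(matchingsOfCard (α := α) m) := by
  induction m with
  | zero => simpa [avoidingMatchings] using card_filter_le _ _
  | succ m ih =>
    set n := Fintype.card α
    have hr := mul_le_four_mul_choose_two (n := n) (r := n - 2 * m) (by omega)
    refine Nat.le_of_mul_le_mul_left ?_ m.succ_pos
    calc (m + 1) * (#(avoidingMatchings E (m + 1)) * n ^ (m + 1))
        = (m + 1) * #(avoidingMatchings E (m + 1)) * n ^ m * n := by ring
      _ ≤ #(avoidingMatchings E m) * ((n - 2 * m) * K) * n ^ m * n :=
        Nat.mul_le_mul_right _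
          (Nat.mul_le_mul_right _ (succ_mul_card_avoidingMatchings_succ_le hK m))
      _ = #(avoidingMatchings E m) * n ^ m * K * ((n - 2 * m) * n) := by ring
      _ ≤ (4 * K) ^ m * #(matchingsOfCard m) * K * (4 * (n - 2 * m).choose 2) :=
        Nat.mul_le_mul (Nat.mul_le_mul_right _ (ih (by omega))) hr
      _ = (4 * K) ^ (m + 1) * (#(matchingsOfCard m) * (n - 2 * m).choose 2) := by ring
      _ = (m + 1) * ((4 * K) ^ (m + 1) * #(matchingsOfCard (m + 1))) := by
        rw [← succ_mul_card_matchingsOfCard_succ]; ring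

lemma card_avoidingMatchings_div_card_matchingsOfCard_le {K : ℕ} {E : Finset (Finset α)}
    (hK : ∀ i, #(univ.filter fun j => j ≠ i ∧ ({i, j} : Finset α) ∉ E) ≤ K) {m : ℕ}
    (hm : 4 * m ≤ Fintype.card α) :
    (#(avoidingMatchings E m) : ℝ) / #(matchingsOfCard (α := α) m) ≤
      (4 * K / Fintype.card α : ℝ) ^ m := by
  rcases (#(matchingsOfCard (α := α) m)).eq_zero_or_pos with hzero | hpos
  · rw [hzero, Nat.cast_zero, div_zero]
    positivity
  have hpow : (0 : ℝ) < (Fintype.card α : ℝ) ^ m := by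
    rcases m.eq_zero_or_pos with rfl | hm0
    · simp
    · exact pow_pos (by exact_mod_cast (by omega : 0 < Fintype.card α)) _
  rw [div_pow, div_le_div_iff₀ (by exact_mod_cast hpos) hpow]
  exact_mod_cast card_avoidingMatchings_mul_pow_le hK hm

end Matching

open Matching in
theorem stmt19_general (n M K : ℕ) (E : Finset (Finset (Fin n)))
    (hK : ∀ i : Fin n,
      ((univ.filter fun j => j ≠ i ∧ ({i, j} : Finset (Fin n)) ∉ E).card) ≤ K)
    (hM : 4 * M ≤ n) :
    ((univ.filter (fun ℳ : Finset (Finset (Fin n)) =>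
        (ℳ.card = M ∧ (∀ e ∈ ℳ, e.card = 2) ∧
          ∀ e ∈ ℳ, ∀ f ∈ ℳ, e ≠ f → Disjoint e f) ∧
        ∀ e ∈ ℳ, e ∉ E)).card : ℝ) /
      ((univ.filter (fun ℳ : Finset (Finset (Fin n)) =>
        ℳ.card = M ∧ (∀ e ∈ ℳ, e.card = 2) ∧
          ∀ e ∈ ℳ, ∀ f ∈ ℳ, e ≠ f → Disjoint e f)).card : ℝ) ≤
      ((4 * K : ℝ) / n) ^ M := by
  have h := card_avoidingMatchings_div_card_matchingsOfCard_le hK (m := M) (by simpa using hM)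
  rw [avoidingMatchings, matchingsOfCard, filter_filter, Fintype.card_fin] at h
  convert h using 5 <;> rfl

/-- If every vertex `i ∈ [n]` has at most `K` partners `j` with `{i,j} ∉ E`,
where `4K ≤ n` and `M ≤ n/4`, then a uniformly random matching of size `M` on
`[n]` avoids `E` entirely with probability at most `(4K/n)^M`. -/
theorem stmt19 (n M K : ℕ) (E : Finset (Finset (Fin n)))
    (hK : ∀ i : Fin n,
      ((univ.filter fun j => j ≠ i ∧ ({i, j} : Finset (Fin n)) ∉ E).card) ≤ K)
    (h4K : 4 * K ≤ n) (hM : 4 * M ≤ n) :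
    ((univ.filter (fun ℳ : Finset (Finset (Fin n)) =>
        (ℳ.card = M ∧ (∀ e ∈ ℳ, e.card = 2) ∧
          ∀ e ∈ ℳ, ∀ f ∈ ℳ, e ≠ f → Disjoint e f) ∧
        ∀ e ∈ ℳ, e ∉ E)).card : ℝ) /
      ((univ.filter (fun ℳ : Finset (Finset (Fin n)) =>
        ℳ.card = M ∧ (∀ e ∈ ℳ, e.card = 2) ∧
          ∀ e ∈ ℳ, ∀ f ∈ ℳ, e ≠ f → Disjoint e f)).card : ℝ) ≤
      ((4 * K : ℝ) / n) ^ M :=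
  stmt19_general n M K E hK hM
end
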